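/- Let (S_1,...,S_L) be a (non-homogeneous) Markov chain on {0,...,k-1} with initial distribution p_{·,1} and transition matrices A_s. Let Z_t = 1_{S_t ≠ 0}. If for every s and every pair i,j ≥ 1 we have p_{i→0,s} = p_{j→0,s} (i.e., the probability of transitioning to state 0 is the same from every nonzero state), then (Z_1,...,Z_L) is itself a Markov chain: P(Z_s = 0 | Z_{s-1},...,Z_1) = P(Z_s = 0 | Z_{s-1}). -/
import Mathlib

lemma aux7 (k m : ℕ) [NeZero k] (p : Fin k → ℝ) (A : ℕ → Fin k → Fin k → ℝ)
    (hAsum : ∀ i, ∑ j, A m i j = 1) (c : ℝ)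
    (Q : (Fin (m + 1) → Fin k) → Prop) [DecidablePred Q]
    (hc : ∀ y : Fin (m + 1) → Fin k, Q y → A m (y (Fin.last m)) 0 = c) :
    (∑ x ∈ Finset.univ.filter (fun x : Fin (m + 2) → Fin k =>
        Q (fun t => x t.castSucc) ∧ x (Fin.last (m + 1)) = 0),
        p (x 0) * ∏ t : Fin (m + 1), A t (x t.castSucc) (x t.succ))
    = c * ∑ x ∈ Finset.univ.filter (fun x : Fin (m + 2) → Fin k =>
        Q (fun t => x t.castSucc)),
        p (x 0) * ∏ t : Fin (m + 1), A t (x t.castSucc) (x t.succ) := by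
  classical
  set G : (Fin (m + 1) → Fin k) → ℝ :=
    fun y => p (y 0) * ∏ j : Fin m, A j (y j.castSucc) (y j.succ) with hG
  have hzero : ∀ (y : Fin (m + 1) → Fin k) (a : Fin k),
      (Fin.snoc y a : Fin (m + 2) → Fin k) 0 = y 0 := by
    intro y a
    have : ((0 : Fin (m + 1)).castSucc) = (0 : Fin (m + 2)) := rfl
    rw [← this, Fin.snoc_castSucc]
  have hsnoc : ∀ (y : Fin (m + 1) → Fin k) (a : Fin k),
      p ((Fin.snoc y a : Fin (m + 2) → Fin k) 0) *
        ∏ t : Fin (m + 1), A t ((Fin.snoc y a : Fin (m + 2) → Fin k) t.castSucc)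
          ((Fin.snoc y a : Fin (m + 2) → Fin k) t.succ)
      = G y * A m (y (Fin.last m)) a := by
    intro y a
    rw [hzero, Fin.prod_univ_castSucc]
    simp only [Fin.snoc_castSucc, Fin.succ_castSucc, Fin.snoc_last, Fin.succ_last,
      Fin.coe_castSucc, Fin.val_last, hG]
    ring
  have e := (Fin.snocEquiv (fun _ : Fin (m + 2) => Fin k))
  -- rewrite both sums via the snoc equivalence
  have key : ∀ (P : (Fin (m + 2) → Fin k) → Prop) [DecidablePred P],
      (∑ x ∈ Finset.univ.filter P,
        p (x 0) * ∏ t : Fin (m + 1), A t (x t.castSucc) (x t.succ))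
      = ∑ y : Fin (m + 1) → Fin k, ∑ a : Fin k,
          if P (Fin.snoc y a) then G y * A m (y (Fin.last m)) a else 0 := by
    intro P _
    rw [Finset.sum_filter, ← Equiv.sum_comp (Fin.snocEquiv (fun _ : Fin (m + 2) => Fin k))
      (fun x => if P x then p (x 0) * ∏ t : Fin (m + 1), A t (x t.castSucc) (x t.succ) else 0),
      Fintype.sum_prod_type, Finset.sum_comm]
    refine Finset.sum_congr rfl fun y _ => Finset.sum_congr rfl fun a _ => ?_
    have hee : ((Fin.snocEquiv fun _ : Fin (m + 2) => Fin k) (a, y)) = Fin.snoc y a := by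
      funext i; simp [Fin.snocEquiv]
    rw [hee]
    by_cases hP : P (Fin.snoc y a)
    · simp only [hP, if_true, hsnoc]
    · simp only [hP, if_false]
  rw [key, key, Finset.mul_sum]
  refine Finset.sum_congr rfl fun y _ => ?_
  simp only [Fin.snoc_castSucc, Fin.snoc_last]
  by_cases hQ : Q y
  · simp only [hQ, true_and, if_true]
    rw [Finset.sum_ite_eq' Finset.univ (0 : Fin k)
      (fun a => G y * A m (y (Fin.last m)) a)]
    simp only [Finset.mem_univ, if_true, hc y hQ]
    rw [← Finset.mul_sum, hAsum, mul_one]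
    ring
  · simp [hQ]

/-- Under the lumpability condition (same probability of transitioning to state 0
from every nonzero state), the collapsed binary process Z_t = 1_{S_t ≠ 0} is itself
a Markov chain: P(Z_s = 0 | Z_{s-1},...,Z_1) = P(Z_s = 0 | Z_{s-1}). -/
theorem stmt7 (k m : ℕ) (hk : 2 ≤ k) [NeZero k]
    (p : Fin k → ℝ) (A : ℕ → Fin k → Fin k → ℝ)
    (hp : ∀ i, 0 ≤ p i) (hpsum : ∑ i, p i = 1)
    (hA : ∀ s i j, 0 ≤ A s i j) (hAsum : ∀ s i, ∑ j, A s i j = 1)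
    (hlump : ∀ (s : ℕ) (i j : Fin k), i ≠ 0 → j ≠ 0 → A s i 0 = A s j 0)
    (Z : Fin k → Fin 2) (hZ : Z = fun i => if i = 0 then 0 else 1)
    (J : (Fin (m + 2) → Fin k) → ℝ)
    (hJ : J = fun x => p (x 0) * ∏ t : Fin (m + 1), A t (x t.castSucc) (x t.succ))
    (b : Fin (m + 1) → Fin 2)
    (hden1 : 0 < ∑ x ∈ Finset.univ.filter
        (fun x : Fin (m + 2) → Fin k => ∀ t : Fin (m + 1), Z (x t.castSucc) = b t), J x)
    (hden2 : 0 < ∑ x ∈ Finset.univ.filter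
        (fun x : Fin (m + 2) → Fin k => Z (x (Fin.last m).castSucc) = b (Fin.last m)), J x) :
    (∑ x ∈ Finset.univ.filter
        (fun x : Fin (m + 2) → Fin k =>
          (∀ t : Fin (m + 1), Z (x t.castSucc) = b t) ∧ Z (x (Fin.last (m + 1))) = 0), J x) /
      (∑ x ∈ Finset.univ.filter
        (fun x : Fin (m + 2) → Fin k => ∀ t : Fin (m + 1), Z (x t.castSucc) = b t), J x) =
    (∑ x ∈ Finset.univ.filter
        (fun x : Fin (m + 2) → Fin k =>
          Z (x (Fin.last m).castSucc) = b (Fin.last m) ∧ Z (x (Fin.last (m + 1))) = 0), J x) /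
      (∑ x ∈ Finset.univ.filter
        (fun x : Fin (m + 2) → Fin k => Z (x (Fin.last m).castSucc) = b (Fin.last m)), J x) := by
  classical
  obtain ⟨k', rfl⟩ : ∃ k', k = k' + 2 := ⟨k - 2, by omega⟩
  have h1 : (1 : Fin (k' + 2)) ≠ 0 := by simp [Fin.ext_iff]
  have hZ0 : ∀ a : Fin (k' + 2), Z a = 0 ↔ a = 0 := by
    intro a; subst hZ; by_cases h : a = 0 <;> simp [h]
  set u : Fin (k' + 2) := if b (Fin.last m) = (0 : Fin 2) then 0 else 1 with hu
  set c := A m u 0 with hcdef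
  have hclass : ∀ y : Fin (m + 1) → Fin (k' + 2),
      Z (y (Fin.last m)) = b (Fin.last m) → A m (y (Fin.last m)) 0 = c := by
    intro y hy
    by_cases hb : b (Fin.last m) = 0
    · have h0 : y (Fin.last m) = 0 := (hZ0 _).1 (hy.trans hb)
      rw [h0, hcdef, hu, if_pos hb]
    · have hne : y (Fin.last m) ≠ 0 := by
        intro h0
        exact hb (hy.symm.trans ((hZ0 _).2 h0))
      rw [hcdef, hu, if_neg hb]
      exact hlump m _ 1 hne h1
  subst hJ
  have S1 := aux7 (k' + 2) m p A (hAsum m) c (fun y => ∀ t, Z (y t) = b t)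
      (fun y hy => hclass y (hy (Fin.last m)))
  have S2 := aux7 (k' + 2) m p A (hAsum m) c
      (fun y => Z (y (Fin.last m)) = b (Fin.last m)) (fun y hy => hclass y hy)
  have hset1 : Finset.univ.filter
      (fun x : Fin (m + 2) → Fin (k' + 2) =>
        (∀ t : Fin (m + 1), Z (x t.castSucc) = b t) ∧ Z (x (Fin.last (m + 1))) = 0)
      = Finset.univ.filter
      (fun x : Fin (m + 2) → Fin (k' + 2) =>
        (fun y => ∀ t, Z (y t) = b t) (fun t => x t.castSucc) ∧ x (Fin.last (m + 1)) = 0) := by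
    ext x; simp [Finset.mem_filter, hZ0]
  have hset2 : Finset.univ.filter
      (fun x : Fin (m + 2) → Fin (k' + 2) =>
        Z (x (Fin.last m).castSucc) = b (Fin.last m) ∧ Z (x (Fin.last (m + 1))) = 0)
      = Finset.univ.filter
      (fun x : Fin (m + 2) → Fin (k' + 2) =>
        (fun y => Z (y (Fin.last m)) = b (Fin.last m)) (fun t => x t.castSucc)
          ∧ x (Fin.last (m + 1)) = 0) := by
    ext x; simp [Finset.mem_filter, hZ0]
  rw [hset1, hset2, S1, S2, mul_div_assoc, mul_div_assoc,
    div_self hden1.ne', div_self hden2.ne']
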